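/- Let φ be a traceless 3×3 complex matrix, let Θ = Θ(φ,0,0,0) (the 6×6 block-diagonal matrix diag(φ, −φ†)), let X, Y be Hermitian 3×3 complex matrices, and let p, q ∈ ℝ. Then the symplectic action of Θ on P(X,Y,p,q) gives Θ·P(X,Y,p,q) = P(φX + Xφ†, −φ†Y − Yφ, 0, 0). (Action of the e₆ subalgebra, complex case.) -/

import Mathlib

open Matrix BigOperators

/-- 3×3 complex matrices. -/
abbrev Mat3 := Matrix (Fin 3) (Fin 3) ℂ

/-- Sign of an integer, valued in ℤ. -/
def sgnZ (n : ℤ) : ℤ := if 0 < n then 1 else if n < 0 then -1 else 0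

/-- The Levi-Civita symbol on `Fin 3`. -/
def eps (a b c : Fin 3) : ℤ :=
  sgnZ ((b : ℤ) - (a : ℤ)) * sgnZ ((c : ℤ) - (a : ℤ)) * sgnZ ((c : ℤ) - (b : ℤ))

/-- The cubie of a 3×3 matrix: (*X)_{abc} = X_a^m ε_{mbc}. -/
noncomputable def cubie (X : Mat3) (a b c : Fin 3) : ℂ :=
  ∑ m, X a m * ((eps m b c : ℤ) : ℂ)

/-- The Jordan product X∘Y = (XY+YX)/2. -/
noncomputable def jord (X Y : Mat3) : Mat3 := (1/2 : ℂ) • (X * Y + Y * X)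

/-- The Freudenthal product. -/
noncomputable def freud (X Y : Mat3) : Mat3 :=
  jord X Y - (1/2 : ℂ) • (X.trace • Y + Y.trace • X)
    + (1/2 : ℂ) • (X.trace * Y.trace - (jord X Y).trace) • (1 : Mat3)

/-- Reduce an index in {1,...,6} to an index in {1,2,3}: for a "large" index
(value ≥ 4, i.e. `Fin 6` value ≥ 3) this is a−3; "small" indices are unchanged. -/
def lo (a : Fin 6) : Fin 3 := ⟨a.val % 3, Nat.mod_lt _ (by norm_num)⟩

/-- The totally antisymmetric rank-3 tensor P(X,Y,p,q) on indices in {1,...,6}: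
its 000 cubie is p·ε, its 100 cubie is *Y, its 011 cubie is *X, its 111 cubie
is q·ε, and all other components are determined by total antisymmetry
(using that (*X)_{abc} is antisymmetric in its last two indices). -/
noncomputable def PT (X Y : Mat3) (p q : ℂ) : Fin 6 → Fin 6 → Fin 6 → ℂ := fun a b c =>
  if a.val < 3 then
    if b.val < 3 then
      if c.val < 3 then p * ((eps (lo a) (lo b) (lo c) : ℤ) : ℂ)  -- (s,s,s)
      else cubie Y (lo c) (lo a) (lo b)                            -- (s,s,l) = +P_{cab}
    else
      if c.val < 3 then -(cubie Y (lo b) (lo a) (lo c))            -- (s,l,s) = −P_{bac}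
      else cubie X (lo a) (lo b) (lo c)                            -- (s,l,l)
  else
    if b.val < 3 then
      if c.val < 3 then cubie Y (lo a) (lo b) (lo c)               -- (l,s,s)
      else -(cubie X (lo b) (lo a) (lo c))                         -- (l,s,l) = −P_{bac}
    else
      if c.val < 3 then cubie X (lo c) (lo a) (lo b)               -- (l,l,s) = +P_{cab}
      else q * ((eps (lo a) (lo b) (lo c) : ℤ) : ℂ)                -- (l,l,l)

/-- The action of a 6×6 matrix Θ on a rank-3 tensor:
(Θ·P)_{abc} = Θ_a^m P_{mbc} + Θ_b^m P_{amc} + Θ_c^m P_{abm}. -/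
noncomputable def act (Θ : Matrix (Fin 6) (Fin 6) ℂ) (P : Fin 6 → Fin 6 → Fin 6 → ℂ) :
    Fin 6 → Fin 6 → Fin 6 → ℂ := fun a b c =>
  (∑ m, Θ a m * P m b c) + (∑ m, Θ b m * P a m c) + (∑ m, Θ c m * P a b m)

/-- The 6×6 block matrix Θ(φ,ρ,A,B) = [[φ − (ρ/3)I, A],[B, −φ† + (ρ/3)I]]. -/
noncomputable def ThetaM (φ : Mat3) (ρ : ℝ) (A B : Mat3) : Matrix (Fin 6) (Fin 6) ℂ :=
  Matrix.reindex finSumFinEquiv finSumFinEquiv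
    (Matrix.fromBlocks (φ - ((ρ : ℂ)/3) • 1) A B (-φᴴ + ((ρ : ℂ)/3) • 1))

/-!
Θ(φ,0,0,0) is block diagonal, so in every component of Θ·P each index is acted on by one
3×3 block only: A = φ on indices ≤ 3 and D = −φ† on indices ≥ 4. The Levi-Civita symbol
is an invariant tensor up to the trace, ∑ₖ (M_n^k ε_{kbc} + M_b^k ε_{nkc} + M_c^k ε_{nbk}) =
tr M · ε_{nbc} (the infinitesimal form of det (exp M) = exp (tr M)). Hence the ε-components are
multiplied by tr A and tr D, and on a cubie *X the two blocks act as X ↦ AX − XD + (tr D) X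
(and Y ↦ DY − YA + (tr A) Y). Both traces vanish when φ is traceless.
-/

theorem sum_mul_eps_add_add_eq_trace_mul {R : Type*} [CommRing R] (M : Matrix (Fin 3) (Fin 3) R)
    (n b c : Fin 3) :
    ∑ k, (M n k * eps k b c + M b k * eps n k c + M c k * eps n b k) = M.trace * eps n b c := by
  fin_cases n <;> fin_cases b <;> fin_cases c <;>
    simp [eps, sgnZ, Fin.sum_univ_three, Matrix.trace] <;> ring

theorem sum_mul_cubie (A X : Mat3) (a b c : Fin 3) :
    ∑ k, A a k * cubie X k b c = cubie (A * X) a b c := by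
  simp only [cubie, mul_apply, Finset.mul_sum, Finset.sum_mul, mul_assoc]
  exact Finset.sum_comm

theorem sum_mul_cubie_add_sum_mul_cubie (D X : Mat3) (a b c : Fin 3) :
    ∑ k, D b k * cubie X a k c + ∑ k, D c k * cubie X a b k
      = D.trace * cubie X a b c - cubie (X * D) a b c := by
  rw [eq_sub_iff_add_eq]
  calc _ = ∑ n, X a n * ∑ k, (D n k * eps k b c + D b k * eps n k c + D c k * eps n b k) := by
        simp only [cubie, mul_apply, Fin.sum_univ_three]
        ring
    _ = D.trace * cubie X a b c := by
        simp only [sum_mul_eps_add_add_eq_trace_mul, cubie, Finset.mul_sum]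
        exact Finset.sum_congr rfl fun n _ => by ring

theorem cubie_add (X Y : Mat3) (a b c : Fin 3) :
    cubie (X + Y) a b c = cubie X a b c + cubie Y a b c := by
  simp only [cubie, Matrix.add_apply, add_mul, Finset.sum_add_distrib]

theorem cubie_sub (X Y : Mat3) (a b c : Fin 3) :
    cubie (X - Y) a b c = cubie X a b c - cubie Y a b c := by
  simp only [cubie, Matrix.sub_apply, sub_mul, Finset.sum_sub_distrib]

theorem cubie_smul (z : ℂ) (X : Mat3) (a b c : Fin 3) :
    cubie (z • X) a b c = z * cubie X a b c := by
  simp only [cubie, Matrix.smul_apply, smul_eq_mul, mul_assoc, Finset.mul_sum]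

theorem sum_mul_cubie_add_add (A D X : Mat3) (a b c : Fin 3) :
    ∑ k, A a k * cubie X k b c + ∑ k, D b k * cubie X a k c + ∑ k, D c k * cubie X a b k
      = cubie (A * X - X * D + D.trace • X) a b c := by
  rw [add_assoc, sum_mul_cubie, sum_mul_cubie_add_sum_mul_cubie, cubie_add, cubie_sub, cubie_smul]
  ring

theorem sum_mul_mul_eps_add_add (A : Mat3) (p : ℂ) (a b c : Fin 3) :
    ∑ k, A a k * (p * eps k b c) + ∑ k, A b k * (p * eps a k c) + ∑ k, A c k * (p * eps a b k)
      = p * A.trace * eps a b c := by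
  rw [mul_assoc, ← sum_mul_eps_add_add_eq_trace_mul, Finset.mul_sum]
  simp only [← Finset.sum_add_distrib]
  exact Finset.sum_congr rfl fun k _ => by ring

noncomputable def fromBlocksDiag (A D : Mat3) : Matrix (Fin 6) (Fin 6) ℂ :=
  reindex finSumFinEquiv finSumFinEquiv (fromBlocks A 0 0 D)

theorem sum_fromBlocksDiag_castAdd_mul (A D : Mat3) (i : Fin 3) (f : Fin 6 → ℂ) :
    ∑ m, fromBlocksDiag A D (Fin.castAdd 3 i) m * f m = ∑ k, A i k * f (Fin.castAdd 3 k) := by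
  refine (finSumFinEquiv.sum_comp
    fun m : Fin (3 + 3) => fromBlocksDiag A D (Fin.castAdd 3 i) m * f m).symm.trans ?_
  simp only [fromBlocksDiag, reindex_apply, submatrix_apply, Fintype.sum_sum_type,
    Equiv.symm_apply_apply, finSumFinEquiv_symm_apply_castAdd, finSumFinEquiv_apply_left,
    fromBlocks_apply₁₁, fromBlocks_apply₁₂, Matrix.zero_apply, zero_mul,
    Finset.sum_const_zero, add_zero]

theorem sum_fromBlocksDiag_natAdd_mul (A D : Mat3) (i : Fin 3) (f : Fin 6 → ℂ) :
    ∑ m, fromBlocksDiag A D (Fin.natAdd 3 i) m * f m = ∑ k, D i k * f (Fin.natAdd 3 k) := by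
  refine (finSumFinEquiv.sum_comp
    fun m : Fin (3 + 3) => fromBlocksDiag A D (Fin.natAdd 3 i) m * f m).symm.trans ?_
  simp only [fromBlocksDiag, reindex_apply, submatrix_apply, Fintype.sum_sum_type,
    Equiv.symm_apply_apply, finSumFinEquiv_symm_apply_natAdd, finSumFinEquiv_apply_right,
    fromBlocks_apply₂₁, fromBlocks_apply₂₂, Matrix.zero_apply, zero_mul,
    Finset.sum_const_zero, zero_add]

theorem lo_castAdd (i : Fin 3) : lo (Fin.castAdd 3 i) = i := by
  ext; simp [lo, Nat.mod_eq_of_lt i.is_lt]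

theorem lo_natAdd (i : Fin 3) : lo (Fin.natAdd 3 i) = i := by
  ext; simp [lo, Nat.mod_eq_of_lt i.is_lt]

theorem act_fromBlocksDiag_PT (A D X Y : Mat3) (p q : ℂ) :
    act (fromBlocksDiag A D) (PT X Y p q)
      = PT (A * X - X * D + D.trace • X) (D * Y - Y * A + A.trace • Y)
          (p * A.trace) (q * D.trace) := by
  funext a b c
  induction a using Fin.addCases (m := 3) (n := 3) <;>
    induction b using Fin.addCases (m := 3) (n := 3) <;>
    induction c using Fin.addCases (m := 3) (n := 3) <;>
    simp only [act, sum_fromBlocksDiag_castAdd_mul, sum_fromBlocksDiag_natAdd_mul, PT,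
      lo_castAdd, lo_natAdd, Fin.val_castAdd, Fin.val_natAdd, Fin.is_lt, if_true,
      add_lt_iff_neg_left, Nat.not_lt_zero, if_false]
  case left.left.left | right.right.right => exact sum_mul_mul_eps_add_add _ _ _ _ _
  all_goals simp only [mul_neg, Finset.sum_neg_distrib, ← sum_mul_cubie_add_add] <;> ring

theorem ThetaM_zero_eq_fromBlocksDiag (φ : Mat3) : ThetaM φ 0 0 0 = fromBlocksDiag φ (-φᴴ) := by
  simp [ThetaM, fromBlocksDiag]

theorem stmt7_general (φ : Mat3) (hφ : φ.trace = 0) (X Y : Mat3)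
    (p q : ℝ) :
    act (ThetaM φ 0 0 0) (PT X Y (p : ℂ) (q : ℂ))
      = PT (φ * X + X * φᴴ) (-(φᴴ * Y) - Y * φ) 0 0 := by
  have hφH : (-φᴴ).trace = 0 := by rw [trace_neg, trace_conjTranspose, hφ, star_zero, neg_zero]
  rw [ThetaM_zero_eq_fromBlocksDiag, act_fromBlocksDiag_PT, hφ, hφH]
  simp only [zero_smul, add_zero, mul_zero, mul_neg, sub_neg_eq_add, neg_mul]

/-- for φ traceless, Θ(φ,0,0,0) acts on P(X,Y,p,q)
(X, Y Hermitian, p, q real) by Θ·P(X,Y,p,q) = P(φX + Xφ†, −φ†Y − Yφ, 0, 0). -/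
theorem stmt7 (φ : Mat3) (hφ : φ.trace = 0) (X Y : Mat3) (hX : Xᴴ = X) (hY : Yᴴ = Y)
    (p q : ℝ) :
    act (ThetaM φ 0 0 0) (PT X Y (p : ℂ) (q : ℂ))
      = PT (φ * X + X * φᴴ) (-(φᴴ * Y) - Y * φ) 0 0 :=
  stmt7_general φ hφ X Y p q
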